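/- arXiv:1204.5452 — 3 statements merged into one kernel-verified Lean document; each statement's English description precedes it below -/
import Mathlib

section
/- For natural numbers q > 1, Q ≥ 1, real α, integer z and natural p ≥ 1, the sum S_Q(α, z) = Σ_{n < q^Q} exp(2πi(αn + (z/p)·S(n))) factors as the product over r from 0 to Q−1 of Σ_{u=0}^{q−1} exp(2πiu(αq^r + z/p)), where S(n) is the base-q digit sum of n. -/
open Complex Finset

/-- `S q n` is the sum of the digits of `n` in base `q`. -/
def digitSum (q n : ℕ) : ℕ := (Nat.digits q n).sum

/-!
Writing `n < q ^ (Q + 1)` as `d + q * m` with `d < q` and `m < q ^ Q` gives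
`S(n) = d + S(m)`, so the summand splits as `e(d (α + z/p)) · e((α q) m + (z/p) S(m))`.
The sum over `n` is therefore the sum over the last digit times the same sum with `α`
replaced by `α q` and one digit fewer; induction on the number of digits gives the product.
-/

theorem Finset.sum_range_mul_eq_sum_sum {M : Type*} [AddCommMonoid M] (a b : ℕ) (f : ℕ → M) :
    ∑ n ∈ range (a * b), f n = ∑ m ∈ range b, ∑ d ∈ range a, f (d + a * m) := by
  induction b with
  | zero => simp
  | succ b ih =>
    rw [Nat.mul_succ, sum_range_add, ih, sum_range_succ]
    simp only [add_comm (a * b)]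

theorem digitSum_add_mul {q d : ℕ} (hd : d < q) (m : ℕ) :
    digitSum q (d + q * m) = d + digitSum q m := by
  obtain rfl | hq : q = 1 ∨ 1 < q := by omega
  · obtain rfl : d = 0 := by omega
    simp
  by_cases h : d = 0 ∧ m = 0
  · simp [h.1, h.2, digitSum]
  · rw [digitSum, Nat.digits_add q hq d m hd (by tauto), List.sum_cons, digitSum]

theorem sum_range_pow_exp_digitSum (q Q : ℕ) (α c : ℂ) :
    ∑ n ∈ range (q ^ Q), exp (2 * Real.pi * I * (α * n + c * digitSum q n)) =
      ∏ r ∈ range Q, ∑ u ∈ range q, exp (2 * Real.pi * I * (u * (α * q ^ r + c))) := by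
  induction Q generalizing α with
  | zero => simp [digitSum]
  | succ Q ih =>
    have hsplit : ∀ d ∈ range q, ∀ m : ℕ,
        exp (2 * Real.pi * I * (α * ↑(d + q * m) + c * digitSum q (d + q * m))) =
          exp (2 * Real.pi * I * (d * (α * q ^ 0 + c))) *
            exp (2 * Real.pi * I * (α * q * m + c * digitSum q m)) := by
      intro d hd m
      rw [digitSum_add_mul (mem_range.mp hd), ← exp_add]
      push_cast
      ring_nf
    calc ∑ n ∈ range (q ^ (Q + 1)), exp (2 * Real.pi * I * (α * n + c * digitSum q n))
        = ∑ m ∈ range (q ^ Q), ∑ d ∈ range q,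
            exp (2 * Real.pi * I * (d * (α * q ^ 0 + c))) *
              exp (2 * Real.pi * I * (α * q * m + c * digitSum q m)) := by
          rw [pow_succ', sum_range_mul_eq_sum_sum]
          exact sum_congr rfl fun m _ => sum_congr rfl fun d hd => hsplit d hd m
      _ = (∑ d ∈ range q, exp (2 * Real.pi * I * (d * (α * q ^ 0 + c)))) *
            ∏ r ∈ range Q, ∑ u ∈ range q, exp (2 * Real.pi * I * (u * (α * q * q ^ r + c))) := by
          rw [← ih, sum_comm, sum_mul_sum]
      _ = ∏ r ∈ range (Q + 1), ∑ u ∈ range q, exp (2 * Real.pi * I * (u * (α * q ^ r + c))) := by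
          simp only [prod_range_succ', pow_succ, mul_assoc, mul_comm (q : ℂ)]
          ring

theorem sum_factorization_general (q p Q : ℕ)
    (α : ℝ) (z : ℤ) :
    ∑ n ∈ Finset.range (q ^ Q),
        Complex.exp (2 * Real.pi * Complex.I *
          ((α : ℂ) * n + (z : ℂ) / (p : ℂ) * (digitSum q n : ℂ))) =
      ∏ r ∈ Finset.range Q, ∑ u ∈ Finset.range q,
        Complex.exp (2 * Real.pi * Complex.I *
          ((u : ℂ) * ((α : ℂ) * (q : ℂ) ^ r + (z : ℂ) / (p : ℂ)))) :=
  sum_range_pow_exp_digitSum q Q α (z / p)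

theorem sum_factorization (q p Q : ℕ) (hq : 1 < q) (hp : 1 ≤ p) (hQ : 1 ≤ Q)
    (α : ℝ) (z : ℤ) :
    ∑ n ∈ Finset.range (q ^ Q),
        Complex.exp (2 * Real.pi * Complex.I *
          ((α : ℂ) * n + (z : ℂ) / (p : ℂ) * (digitSum q n : ℂ))) =
      ∏ r ∈ Finset.range Q, ∑ u ∈ Finset.range q,
        Complex.exp (2 * Real.pi * Complex.I *
          ((u : ℂ) * ((α : ℂ) * (q : ℂ) ^ r + (z : ℂ) / (p : ℂ)))) :=
  sum_factorization_general q p Q α z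
end

section
/- For any positive integer q ≥ 2 and any real x, the averaged sum (1/q) Σ_{j=0}^{q−1} min(q, 1/(2‖(x+j)/q + z/p‖)) is at most 6(1 + ln q), where z is an integer and p a positive integer. -/
/-!
Modulo 1, the points `(x + j) / q + z / p`, `j < q`, are the grid `(m + θ) / q`, `m < q`, for
`θ = fract (q (x / q + z / p)) ∈ [0, 1)`. The `m`-th grid point is at distance at least
`min m (q - 1 - m) / q` from the integers, so its summand is at most `q / (min m (q - 1 - m) + 1)`;
summing gives at most `2 q H_q ≤ 2 q (1 + log q)`.
-/

open Finset

/-- Distance from a real number to the nearest integer. -/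
noncomputable def distNearestInt (x : ℝ) : ℝ := |x - round x|

open Function

lemma Function.Periodic.sum_range_add_intCast {M : Type*} [AddCancelCommMonoid M]
    {g : ℤ → M} {q : ℕ} (hg : Periodic g q) (N : ℤ) :
    ∑ j ∈ range q, g (N + j) = ∑ j ∈ range q, g j := by
  have step : ∀ N : ℤ, ∑ j ∈ range q, g (N + 1 + j) = ∑ j ∈ range q, g (N + j) := by
    intro N
    -- both sides are `∑ j ∈ range (q + 1), g (N + j)` minus one of its end terms `g N = g (N + q)`
    have h := (sum_range_succ' (fun j => g (N + j)) q).symm.trans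
      (sum_range_succ (fun j => g (N + j)) q)
    simp only [Nat.cast_add, Nat.cast_one, Nat.cast_zero, add_zero, hg N] at h
    simpa only [add_comm, add_left_comm] using add_right_cancel h
  induction N using Int.induction_on with
  | zero => simp
  | succ n ih => rw [step, ih]
  | pred n ih => rw [← ih, ← step (-n - 1), sub_add_cancel]

lemma distNearestInt_add_intCast (y : ℝ) (n : ℤ) : distNearestInt (y + n) = distNearestInt y := by
  unfold distNearestInt
  rw [round_add_intCast]
  push_cast
  ring_nf

lemma distNearestInt_eq_min {y : ℝ} (h0 : 0 ≤ y) (h1 : y ≤ 1) :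
    distNearestInt y = min y (1 - y) := by
  unfold distNearestInt
  rcases lt_or_ge y (1 / 2) with h | h
  · have hr : round y = 0 := by
      rw [round_eq, Int.floor_eq_iff]
      constructor <;> push_cast <;> linarith
    rw [hr, Int.cast_zero, sub_zero, abs_of_nonneg h0, min_eq_left (by linarith)]
  · have hr : round y = 1 := by
      rw [round_eq, Int.floor_eq_iff]
      constructor <;> push_cast <;> linarith
    rw [hr, Int.cast_one, abs_of_nonpos (by linarith), min_eq_right (by linarith), neg_sub]

lemma natCast_le_mul_distNearestInt {q m k : ℕ} {θ : ℝ} (hθ0 : 0 ≤ θ) (hθ1 : θ < 1)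
    (hkm : k ≤ m) (hkq : k + m + 1 ≤ q) : (k : ℝ) ≤ q * distNearestInt ((m + θ) / q) := by
  have hq : (0 : ℝ) < q := by exact_mod_cast (by omega : 0 < q)
  have hkm' : (k : ℝ) ≤ m := by exact_mod_cast hkm
  have hkq' : (k : ℝ) + m + 1 ≤ q := by exact_mod_cast hkq
  have hu0 : 0 ≤ (m + θ) / q := by positivity
  have hu1 : (m + θ) / q ≤ 1 := by rw [div_le_one hq]; linarith
  rw [distNearestInt_eq_min hu0 hu1, mul_min_of_nonneg _ _ hq.le, mul_sub, mul_one,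
    mul_div_cancel₀ _ hq.ne']
  exact le_min (by linarith) (by linarith)

noncomputable def cappedInvDist (Q y : ℝ) : ℝ :=
  if distNearestInt y = 0 then Q else min Q (1 / (2 * distNearestInt y))

lemma cappedInvDist_add_intCast (Q y : ℝ) (n : ℤ) :
    cappedInvDist Q (y + n) = cappedInvDist Q y := by
  rw [cappedInvDist, cappedInvDist, distNearestInt_add_intCast]

lemma cappedInvDist_le (Q y : ℝ) : cappedInvDist Q y ≤ Q := by
  unfold cappedInvDist
  split_ifs
  · exact le_rfl
  · exact min_le_left _ _

lemma cappedInvDist_le_div_succ {q k : ℕ} {y : ℝ} (hk : (k : ℝ) ≤ q * distNearestInt y) :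
    cappedInvDist q y ≤ q / (k + 1) := by
  obtain rfl | hk0 := k.eq_zero_or_pos
  · simpa using cappedInvDist_le q y
  have hk1 : (1 : ℝ) ≤ k := by exact_mod_cast hk0
  have hd : 0 < distNearestInt y := by
    refine (abs_nonneg _).lt_of_ne' fun hd => ?_
    rw [distNearestInt, hd, mul_zero] at hk
    linarith
  rw [cappedInvDist, if_neg hd.ne']
  refine (min_le_right _ _).trans ?_
  rw [div_le_div_iff₀ (by positivity) (by positivity)]
  linarith

lemma one_div_min_add_one_le (a b : ℕ) :
    1 / ((min a b : ℕ) + 1 : ℝ) ≤ 1 / (a + 1) + 1 / (b + 1) := by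
  rcases le_total a b with h | h
  · rw [min_eq_left h, le_add_iff_nonneg_right]
    positivity
  · rw [min_eq_right h, le_add_iff_nonneg_left]
    positivity

lemma sum_range_cappedInvDist_le {q : ℕ} {θ : ℝ} (hθ0 : 0 ≤ θ) (hθ1 : θ < 1) :
    ∑ m ∈ range q, cappedInvDist q ((m + θ) / q) ≤ 2 * q * harmonic q := by
  have hharmonic : ∑ m ∈ range q, 1 / ((m : ℝ) + 1) = harmonic q := by
    simp [harmonic]
  calc ∑ m ∈ range q, cappedInvDist q ((m + θ) / q)
      ≤ ∑ m ∈ range q, q * (1 / ((m : ℝ) + 1) + 1 / (((q - 1 - m : ℕ) : ℝ) + 1)) := by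
        refine sum_le_sum fun m hm => ?_
        have hm : m < q := mem_range.mp hm
        refine (cappedInvDist_le_div_succ (natCast_le_mul_distNearestInt hθ0 hθ1
          (min_le_left m (q - 1 - m)) (by omega))).trans ?_
        rw [div_eq_mul_one_div]
        exact mul_le_mul_of_nonneg_left (one_div_min_add_one_le _ _) (Nat.cast_nonneg q)
    _ = 2 * q * harmonic q := by
        rw [← mul_sum, sum_add_distrib, sum_range_reflect (fun m => 1 / ((m : ℝ) + 1)) q,
          hharmonic]
        ring

lemma sum_range_cappedInvDist_add_div (Q : ℝ) (q : ℕ) (c : ℝ) :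
    ∑ j ∈ range q, cappedInvDist Q (c + j / q) =
      ∑ m ∈ range q, cappedInvDist Q ((m + Int.fract (q * c)) / q) := by
  obtain rfl | hq := q.eq_zero_or_pos
  · simp
  have hq' : (q : ℝ) ≠ 0 := by positivity
  have hfloor := Int.floor_add_fract ((q : ℝ) * c)
  set θ := Int.fract (q * c)
  set g : ℤ → ℝ := fun k => cappedInvDist Q ((k + θ) / q)
  have hg : Periodic g q := fun k => by
    simp only [g, Int.cast_add, Int.cast_natCast]
    rw [show ((k : ℝ) + q + θ) / q = (k + θ) / q + ((1 : ℤ) : ℝ) by field_simp; push_cast; ring,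
      cappedInvDist_add_intCast]
  have hshift : ∀ j : ℕ, cappedInvDist Q (c + j / q) = g (⌊q * c⌋ + j) := by
    intro j
    simp only [g, Int.cast_add, Int.cast_natCast]
    congr 1
    rw [eq_div_iff hq', add_mul, div_mul_cancel₀ _ hq']
    linarith
  simp_rw [hshift]
  rw [hg.sum_range_add_intCast]
  simp [g]

theorem averaged_min_sum_bound_general (q : ℕ) (z : ℤ) (p : ℕ) (x : ℝ) :
    (1 / (q : ℝ)) * ∑ j ∈ Finset.range q,
        (if distNearestInt ((x + j) / q + (z : ℝ) / p) = 0 then (q : ℝ)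
         else min (q : ℝ) (1 / (2 * distNearestInt ((x + j) / q + (z : ℝ) / p)))) ≤
      6 * (1 + Real.log q) := by
  have hterm : ∀ j ∈ range q,
      (if distNearestInt ((x + j) / q + (z : ℝ) / p) = 0 then (q : ℝ)
        else min (q : ℝ) (1 / (2 * distNearestInt ((x + j) / q + (z : ℝ) / p)))) =
      cappedInvDist q (x / q + z / p + j / q) := by
    intro j _
    rw [show (x + j) / q + (z : ℝ) / p = x / q + z / p + j / q by ring, cappedInvDist]
  rw [sum_congr rfl hterm, sum_range_cappedInvDist_add_div]
  calc 1 / (q : ℝ) * ∑ m ∈ range q, cappedInvDist q ((m + Int.fract (q * (x / q + z / p))) / q)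
      ≤ 1 / q * (2 * q * harmonic q) := by
        gcongr
        exact sum_range_cappedInvDist_le (Int.fract_nonneg _) (Int.fract_lt_one _)
    _ = 2 * (q / q) * harmonic q := by ring
    _ ≤ 2 * 1 * (1 + Real.log q) := by
        gcongr
        exacts [by simp only [harmonic]; positivity, div_self_le_one (q : ℝ),
          harmonic_le_one_add_log q]
    _ ≤ 6 * (1 + Real.log q) := by linarith [Real.log_natCast_nonneg q]

theorem averaged_min_sum_bound (q : ℕ) (hq : 2 ≤ q) (z : ℤ) (p : ℕ) (hp : 0 < p) (x : ℝ) :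
    (1 / (q : ℝ)) * ∑ j ∈ Finset.range q,
        (if distNearestInt ((x + j) / q + (z : ℝ) / p) = 0 then (q : ℝ)
         else min (q : ℝ) (1 / (2 * distNearestInt ((x + j) / q + (z : ℝ) / p)))) ≤
      6 * (1 + Real.log q) :=
  averaged_min_sum_bound_general q z p x
end

section
/- For every x ≥ 1 and every complex-valued function f with |f(n)| ≤ 1 for all n, |Σ_{n ≤ x} τ(n) f(n)| ≤ 2 Σ_{l < √x} |Σ_{l² < ln ≤ x} f(ln)| + √x, where the inner sum runs over natural numbers n with l² < ln ≤ x and τ is the divisor function. -/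
open Finset Complex
open scoped Classical

/-! Writing `τ(n)` as the number of factorisations `n = a * b` turns the left-hand side into a sum
of `f (a * b)` over the lattice points of the region `a * b ≤ x`. The swap `(a, b) ↦ (b, a)` matches
the points with `a < b` with those with `a > b`; grouped by the smaller factor `l`, which then
satisfies `l < √x`, they give the inner sums over `l² < l n ≤ x`. The diagonal `a = b` consists of
at most `√x` points, each contributing a term of norm at most `1`. -/

def hyperbolaRegion (N : ℕ) : Finset (ℕ × ℕ) :=
  (Icc 1 N ×ˢ Icc 1 N).filter fun p => p.1 * p.2 ≤ N

theorem mem_hyperbolaRegion {N : ℕ} {p : ℕ × ℕ} :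
    p ∈ hyperbolaRegion N ↔ p.1 * p.2 ∈ Icc 1 N := by
  obtain ⟨a, b⟩ := p
  simp only [hyperbolaRegion, mem_filter, mem_product, mem_Icc]
  constructor
  · rintro ⟨⟨⟨ha, -⟩, hb, -⟩, hab⟩
    exact ⟨Nat.one_le_iff_ne_zero.2 (by positivity), hab⟩
  · rintro ⟨hab1, hab⟩
    have ha : 1 ≤ a := Nat.pos_of_mul_pos_right hab1
    have hb : 1 ≤ b := Nat.pos_of_mul_pos_left hab1
    exact ⟨⟨⟨ha, (Nat.le_mul_of_pos_right a hb).trans hab⟩,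
      hb, (Nat.le_mul_of_pos_left b ha).trans hab⟩, hab⟩

theorem sum_Icc_card_divisors_nsmul {M : Type*} [AddCommMonoid M] (N : ℕ) (g : ℕ → M) :
    ∑ n ∈ Icc 1 N, n.divisors.card • g n = ∑ p ∈ hyperbolaRegion N, g (p.1 * p.2) := by
  rw [← sum_fiberwise_of_maps_to fun p hp => mem_hyperbolaRegion.1 hp]
  refine sum_congr rfl fun n hn => ?_
  have hfiber : (hyperbolaRegion N).filter (fun p => p.1 * p.2 = n) = n.divisorsAntidiagonal := by
    ext p
    rw [mem_filter, mem_hyperbolaRegion, Nat.mem_divisorsAntidiagonal]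
    constructor
    · rintro ⟨-, rfl⟩
      exact ⟨rfl, by grind⟩
    · rintro ⟨rfl, -⟩
      exact ⟨hn, rfl⟩
  rw [hfiber, Nat.sum_divisorsAntidiagonal (fun a b => g (a * b)), sum_congr rfl fun d hd => congrArg g (Nat.mul_div_cancel' (Nat.dvd_of_mem_divisors hd)),
    sum_const]

theorem Finset.sum_eq_two_nsmul_sum_filter_lt_add_sum_filter_eq {α M : Type*} [LinearOrder α]
    [AddCommMonoid M] (s : Finset (α × α)) (hs : ∀ p ∈ s, p.swap ∈ s) (F : α × α → M)
    (hF : ∀ p, F p.swap = F p) :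
    ∑ p ∈ s, F p = 2 • ∑ p ∈ s with p.1 < p.2, F p + ∑ p ∈ s with p.1 = p.2, F p := by
  have hswap : ∑ p ∈ s with p.2 < p.1, F p = ∑ p ∈ s with p.1 < p.2, F p :=
    sum_nbij' Prod.swap Prod.swap (by simp +contextual [hs]) (by simp +contextual [hs])
      (by simp) (by simp) (fun p _ => (hF p).symm)
  rw [← sum_filter_add_sum_filter_not s (fun p => p.1 < p.2),
    ← sum_filter_add_sum_filter_not (s.filter fun p => ¬ p.1 < p.2) (fun p => p.2 < p.1),
    filter_filter, filter_filter, two_nsmul, add_assoc, ← hswap]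
  congr 3 <;> exact filter_congr fun p _ => by grind

theorem sum_hyperbolaRegion_filter_lt {M : Type*} [AddCommMonoid M] (N : ℕ)
    (F : ℕ × ℕ → M) :
    ∑ p ∈ hyperbolaRegion N with p.1 < p.2, F p =
      ∑ l ∈ Icc 1 N, ∑ n ∈ Icc 1 N with l < n ∧ l * n ≤ N, F (l, n) := by
  refine sum_finset_product _ _ _ fun p => ?_
  simp only [hyperbolaRegion, mem_filter, mem_product]
  tauto

theorem sum_hyperbolaRegion_filter_eq {M : Type*} [AddCommMonoid M] (N : ℕ)
    (F : ℕ × ℕ → M) :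
    ∑ p ∈ hyperbolaRegion N with p.1 = p.2, F p = ∑ a ∈ Icc 1 N.sqrt, F (a, a) := by
  have hdiag : ∀ a, a * a ∈ Icc 1 N ↔ a ∈ Icc 1 N.sqrt := fun a => by
    simp only [mem_Icc, Nat.le_sqrt, Nat.one_le_iff_ne_zero, mul_self_ne_zero]
  refine sum_nbij' Prod.fst (fun a => (a, a)) ?_ ?_ ?_ (fun a _ => rfl) ?_
  · rintro ⟨a, b⟩ hp
    obtain ⟨hab, rfl : a = b⟩ := mem_filter.1 hp
    exact (hdiag a).1 (mem_hyperbolaRegion.1 hab)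
  · intro a ha
    exact mem_filter.2 ⟨mem_hyperbolaRegion.2 ((hdiag a).2 ha), rfl⟩
  all_goals
    rintro ⟨a, b⟩ hp
    obtain ⟨-, rfl : a = b⟩ := mem_filter.1 hp
    rfl

theorem sum_hyperbolaRegion_mul_eq {M : Type*} [AddCommMonoid M] (N : ℕ) (g : ℕ → M) :
    ∑ p ∈ hyperbolaRegion N, g (p.1 * p.2) =
      2 • ∑ l ∈ Icc 1 N, ∑ n ∈ Icc 1 N with l < n ∧ l * n ≤ N, g (l * n) +
        ∑ a ∈ Icc 1 N.sqrt, g (a * a) := by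
  have hswap : ∀ p ∈ hyperbolaRegion N, p.swap ∈ hyperbolaRegion N := fun p hp => by
    rwa [mem_hyperbolaRegion, Prod.fst_swap, Prod.snd_swap, mul_comm, ← mem_hyperbolaRegion]
  rw [sum_eq_two_nsmul_sum_filter_lt_add_sum_filter_eq _ hswap _
      (fun p => by rw [Prod.fst_swap, Prod.snd_swap, mul_comm]),
    sum_hyperbolaRegion_filter_lt, sum_hyperbolaRegion_filter_eq]

theorem filter_sq_lt_cast_mul_and_cast_mul_le_eq {x : ℝ} (hx : 0 ≤ x) {l : ℕ} (hl : 0 < l)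
    (s : Finset ℕ) :
    s.filter (fun n : ℕ => (l : ℝ) ^ 2 < (l * n : ℕ) ∧ ((l * n : ℕ) : ℝ) ≤ x) =
      s.filter (fun n => l < n ∧ l * n ≤ ⌊x⌋₊) := by
  refine filter_congr fun n _ => and_congr ?_ (Nat.le_floor_iff hx).symm
  rw [← Nat.cast_pow, Nat.cast_lt, sq, Nat.mul_lt_mul_left hl]

theorem cast_lt_sqrt_of_lt_of_mul_le_floor {x : ℝ} {l n : ℕ} (hl : 0 < l)
    (hln : l < n) (hlnx : l * n ≤ ⌊x⌋₊) : (l : ℝ) < Real.sqrt x := by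
  have hsq : l ^ 2 < ⌊x⌋₊ := (sq l).trans_lt ((Nat.mul_lt_mul_left hl).2 hln |>.trans_le hlnx)
  exact Real.lt_sqrt_of_sq_lt (by exact_mod_cast Nat.lt_of_lt_floor hsq)

theorem norm_sum_Icc_sqrt_floor_le {E : Type*} [SeminormedAddCommGroup E] {x : ℝ} (hx : 0 ≤ x)
    (g : ℕ → E) (hg : ∀ n, ‖g n‖ ≤ 1) :
    ‖∑ a ∈ Icc 1 (⌊x⌋₊).sqrt, g a‖ ≤ Real.sqrt x :=
  calc _ ≤ ∑ a ∈ Icc 1 (⌊x⌋₊).sqrt, ‖g a‖ := norm_sum_le _ _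
    _ ≤ (⌊x⌋₊).sqrt := by simpa using sum_le_card_nsmul (Icc 1 (⌊x⌋₊).sqrt) _ 1 fun a _ => hg a
    _ ≤ Real.sqrt ⌊x⌋₊ := Real.nat_sqrt_le_real_sqrt
    _ ≤ Real.sqrt x := Real.sqrt_le_sqrt (Nat.floor_le hx)

theorem tau_weighted_sum_bound (x : ℝ) (hx : 1 ≤ x) (f : ℕ → ℂ)
    (hf : ∀ n, ‖f n‖ ≤ 1) :
    ‖∑ n ∈ Finset.Icc 1 ⌊x⌋₊, (n.divisors.card : ℂ) * f n‖ ≤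
      2 * ∑ l ∈ (Finset.Icc 1 ⌊x⌋₊).filter (fun l : ℕ => (l : ℝ) < Real.sqrt x),
            ‖∑ n ∈ (Finset.Icc 1 ⌊x⌋₊).filter
                (fun n : ℕ => (l : ℝ) ^ 2 < (l * n : ℕ) ∧ ((l * n : ℕ) : ℝ) ≤ x),
              f (l * n)‖ +
        Real.sqrt x := by
  have hx₀ : 0 ≤ x := zero_le_one.trans hx
  set N := ⌊x⌋₊
  have houter : ∑ l ∈ (Icc 1 N).filter (fun l : ℕ => (l : ℝ) < Real.sqrt x),
        ‖∑ n ∈ (Icc 1 N).filter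
          (fun n : ℕ => (l : ℝ) ^ 2 < (l * n : ℕ) ∧ ((l * n : ℕ) : ℝ) ≤ x), f (l * n)‖ =
      ∑ l ∈ Icc 1 N, ‖∑ n ∈ Icc 1 N with l < n ∧ l * n ≤ N, f (l * n)‖ := by
    rw [sum_congr rfl fun l hl => by
      rw [filter_sq_lt_cast_mul_and_cast_mul_le_eq hx₀ (mem_Icc.1 (mem_filter.1 hl).1).1]]
    refine sum_filter_of_ne fun l hl hne => ?_
    obtain ⟨n, hn⟩ := nonempty_of_sum_ne_zero (norm_ne_zero_iff.1 hne)
    exact cast_lt_sqrt_of_lt_of_mul_le_floor (mem_Icc.1 hl).1 (mem_filter.1 hn).2.1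
      (mem_filter.1 hn).2.2
  have hoff := norm_sum_le (Icc 1 N) fun l => ∑ n ∈ Icc 1 N with l < n ∧ l * n ≤ N, f (l * n)
  have hdiag := norm_sum_Icc_sqrt_floor_le hx₀ (fun a => f (a * a)) fun a => hf (a * a)
  simp_rw [← nsmul_eq_mul, sum_Icc_card_divisors_nsmul, sum_hyperbolaRegion_mul_eq, two_nsmul,
    houter]
  calc _ ≤ _ := norm_add₃_le
    _ ≤ _ := by linarith
end
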